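/- (Lower bound for the adaptive Han–Kobayashi exponent) For channels W, W̄ and any r, under any sequence of adaptive strategies and tests with liminf (−1/n) log E_{Q_{W̄,P⃗ⁿ}}[1−f_n] ≥ r, one has liminf_{n→∞} (−1/n) log E_{Q_{W,P⃗ⁿ}}[1−f_n] ≥ sup_{s≤0} (−s·r − φ(s|W‖W̄))/(1−s), where φ(s|W‖W̄) = sup_x φ(s|W_x‖W̄_x). -/

import Mathlib

open Filter

/-- `W` is a (classical) channel from `X` to `Y` with full-support outputs. -/
def IsChannel {X Y : Type*} [Fintype Y] (W : X → Y → ℝ) : Prop :=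
  ∀ x, (∀ y, 0 < W x y) ∧ ∑ y, W x y = 1

/-- An adaptive strategy: for each step `k`, a conditional distribution of the
`(k+1)`-st input given the first `k` input-output pairs. -/
def IsStrategy {X Y : Type*} [Fintype X]
    (strat : (k : ℕ) → (Fin k → X × Y) → X → ℝ) : Prop :=
  ∀ k h, (∀ x, 0 ≤ strat k h x) ∧ ∑ x, strat k h x = 1

/-- Joint distribution of `n` adaptive input-output pairs under channel `W`. -/
noncomputable def Qdist {X Y : Type*} [Fintype X] [Fintype Y] (W : X → Y → ℝ)
    (strat : (k : ℕ) → (Fin k → X × Y) → X → ℝ) (n : ℕ) (h : Fin n → X × Y) : ℝ :=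
  ∏ k : Fin n,
    strat k.1 (fun j : Fin k.1 => h ⟨j.1, j.2.trans k.2⟩) (h k).1 * W (h k).1 (h k).2

/-- Marginal distribution of the `(k+1)`-st input under channel `W`. -/
noncomputable def inMarg {X Y : Type*} [Fintype X] [Fintype Y] (W : X → Y → ℝ)
    (strat : (k : ℕ) → (Fin k → X × Y) → X → ℝ) (k : ℕ) (x : X) : ℝ :=
  ∑ h : Fin k → X × Y, Qdist W strat k h * strat k h x

/-- Kullback–Leibler divergence of finitely supported distributions. -/
noncomputable def Dkl {α : Type*} [Fintype α] (P Q : α → ℝ) : ℝ :=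
  ∑ a, P a * Real.log (P a / Q a)

/-- `φ(s|P‖Q) = log ∑ Q^s P^{1-s}`. -/
noncomputable def phiRel {α : Type*} [Fintype α] (s : ℝ) (P Q : α → ℝ) : ℝ :=
  Real.log (∑ a, Q a ^ s * P a ^ (1 - s))


/-!
For `s ≤ 0`, Hölder's inequality with exponents `1 - s` and `(1 - s) / (-s)`, applied to the
weights `Q̄ (1 - f)` and the likelihood ratio `Q / Q̄`, gives
`(1 - s) log E_Q[1 - f] ≤ -s log E_Q̄[1 - f] + φ(s | Q ‖ Q̄)`.
For the adaptive joint distributions, `Q̄^s Q^(1-s)` is the product along the history of the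
strategy weights and of the kernel `W̄^s W^(1-s)`, whose rows sum to
`exp φ(s | W_x ‖ W̄_x) ≤ exp φ(s | W ‖ W̄)`; hence `φ(s | Q ‖ Q̄) ≤ n φ(s | W ‖ W̄)`.
Dividing by `-n` bounds the exponent under `W` from below by an increasing function of the
exponent under `W̄`, and the bound passes to the liminf.

The real `liminf` of a sequence tending to `+∞` is `0`. Exchanging `W` and `W̄` (at `s = -1`)
shows that the two exponents tend to `+∞` together, and in that case `r ≤ 0` and `φ ≥ 0` make
the left-hand side nonpositive.
-/

open Real

section FiniteDistributions

variable {α : Type*} [Fintype α] {P Pb g : α → ℝ} {s : ℝ}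

theorem sum_mul_le_rpow_mul_rpow (hs : s ≤ 0) (hP : ∀ a, 0 ≤ P a) (hPb : ∀ a, 0 ≤ Pb a)
    (hac : ∀ a, Pb a = 0 → P a = 0) (hg : ∀ a, g a ∈ Set.Icc (0 : ℝ) 1) :
    ∑ a, P a * g a ≤
      (∑ a, Pb a * g a) ^ (1 - (1 - s)⁻¹) * (∑ a, Pb a ^ s * P a ^ (1 - s)) ^ (1 - s)⁻¹ := by
  have hterm : ∀ a, Pb a * g a * (P a / Pb a) ^ (1 - s) ≤ Pb a ^ s * P a ^ (1 - s) := by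
    intro a
    rcases (hPb a).eq_or_lt with h0 | hpos
    · rw [← h0, zero_mul, zero_mul]
      exact mul_nonneg (rpow_nonneg le_rfl _) (rpow_nonneg (hP a) _)
    · rw [div_rpow (hP a) hpos.le, rpow_sub hpos, rpow_one]
      calc Pb a * g a * (P a ^ (1 - s) / (Pb a / Pb a ^ s))
          = g a * (Pb a ^ s * P a ^ (1 - s)) := by field_simp
        _ ≤ Pb a ^ s * P a ^ (1 - s) :=
          mul_le_of_le_one_left (mul_nonneg (rpow_nonneg hpos.le _) (rpow_nonneg (hP a) _))
            (hg a).2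
  calc ∑ a, P a * g a = ∑ a, Pb a * g a * (P a / Pb a) := by
        refine Finset.sum_congr rfl fun a _ => ?_
        rcases (hPb a).eq_or_lt with h0 | hpos
        · simp [← h0, hac a h0.symm]
        · field_simp
    _ ≤ (∑ a, Pb a * g a) ^ (1 - (1 - s)⁻¹) *
          (∑ a, Pb a * g a * (P a / Pb a) ^ (1 - s)) ^ (1 - s)⁻¹ :=
        inner_le_weight_mul_Lp_of_nonneg _ (by linarith) _ _
          (fun a => mul_nonneg (hPb a) (hg a).1) (fun a => div_nonneg (hP a) (hPb a))
    _ ≤ _ := by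
        refine mul_le_mul_of_nonneg_left (rpow_le_rpow ?_ (Finset.sum_le_sum fun a _ => hterm a)
          (inv_nonneg.2 (by linarith))) (rpow_nonneg ?_ _)
        · exact Finset.sum_nonneg fun a _ =>
            mul_nonneg (mul_nonneg (hPb a) (hg a).1) (rpow_nonneg (div_nonneg (hP a) (hPb a)) _)
        · exact Finset.sum_nonneg fun a _ => mul_nonneg (hPb a) (hg a).1

theorem one_sub_mul_log_sum_mul_le (hs : s ≤ 0) (hP : ∀ a, 0 ≤ P a) (hPb : ∀ a, 0 ≤ Pb a)
    (hac : ∀ a, Pb a = 0 → P a = 0) (hg : ∀ a, g a ∈ Set.Icc (0 : ℝ) 1)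
    (hpos : 0 < ∑ a, P a * g a) :
    (1 - s) * log (∑ a, P a * g a) ≤ -s * log (∑ a, Pb a * g a) + phiRel s P Pb := by
  obtain ⟨a, -, ha⟩ := Finset.exists_lt_of_sum_lt (by simpa using hpos : ∑ _a, (0 : ℝ) < _)
  have hPa : 0 < P a := pos_of_mul_pos_left ha (hg a).1
  have hPba : 0 < Pb a := (hPb a).lt_of_ne' fun h => hPa.ne' (hac a h)
  have hB : 0 < ∑ a, Pb a * g a :=
    (mul_pos hPba (pos_of_mul_pos_right ha hPa.le)).trans_le <|
      Finset.single_le_sum (fun a _ => mul_nonneg (hPb a) (hg a).1) (Finset.mem_univ a)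
  have hT : 0 < ∑ a, Pb a ^ s * P a ^ (1 - s) :=
    (mul_pos (rpow_pos_of_pos hPba s) (rpow_pos_of_pos hPa _)).trans_le <|
      Finset.single_le_sum (fun a _ => mul_nonneg (rpow_nonneg (hPb a) _) (rpow_nonneg (hP a) _))
        (Finset.mem_univ a)
  have h1s : 0 < 1 - s := by linarith
  have hlog := log_le_log hpos (sum_mul_le_rpow_mul_rpow hs hP hPb hac hg)
  rw [log_mul (rpow_pos_of_pos hB _).ne' (rpow_pos_of_pos hT _).ne', log_rpow hB,
    log_rpow hT] at hlog
  calc (1 - s) * log (∑ a, P a * g a)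
      ≤ (1 - s) * ((1 - (1 - s)⁻¹) * log (∑ a, Pb a * g a) +
          (1 - s)⁻¹ * log (∑ a, Pb a ^ s * P a ^ (1 - s))) :=
        mul_le_mul_of_nonneg_left hlog h1s.le
    _ = -s * log (∑ a, Pb a * g a) + phiRel s P Pb := by
        rw [phiRel]
        field_simp
        ring

theorem phiRel_nonneg (hs : s ≤ 0) (hP : ∀ a, 0 ≤ P a) (hPb : ∀ a, 0 ≤ Pb a)
    (hac : ∀ a, Pb a = 0 → P a = 0) (hP1 : ∑ a, P a = 1) (hPb1 : ∑ a, Pb a = 1) :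
    0 ≤ phiRel s P Pb := by
  have := one_sub_mul_log_sum_mul_le (g := 1) hs hP hPb hac (fun _ => ⟨zero_le_one, le_rfl⟩)
    (by simp [hP1])
  simpa [hP1, hPb1] using this

theorem sum_mul_eq_zero_of_absolutelyContinuous (hP : ∀ a, 0 ≤ P a)
    (hac : ∀ a, P a = 0 → Pb a = 0) (hg : ∀ a, 0 ≤ g a) (h0 : ∑ a, P a * g a = 0) :
    ∑ a, Pb a * g a = 0 := by
  rw [Finset.sum_eq_zero_iff_of_nonneg fun a _ => mul_nonneg (hP a) (hg a)] at h0
  refine Finset.sum_eq_zero fun a ha => ?_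
  rcases mul_eq_zero.1 (h0 a ha) with h | h
  · rw [hac a h, zero_mul]
  · rw [h, mul_zero]

end FiniteDistributions

section AdaptiveStrategies

variable {X Y : Type*} [Fintype X] [Fintype Y]
  {strat : (k : ℕ) → (Fin k → X × Y) → X → ℝ} {V V' : X → Y → ℝ} {s : ℝ}

noncomputable def phiChannel (s : ℝ) (V V' : X → Y → ℝ) : ℝ :=
  ⨆ x, phiRel s (V x) (V' x)

theorem phiRel_le_phiChannel (s : ℝ) (x : X) : phiRel s (V x) (V' x) ≤ phiChannel s V V' :=
  le_ciSup (f := fun x => phiRel s (V x) (V' x)) (Set.finite_range _).bddAbove x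

theorem phiChannel_nonneg [Nonempty X] (hV : IsChannel V) (hV' : IsChannel V') (hs : s ≤ 0) :
    0 ≤ phiChannel s V V' := by
  obtain ⟨x⟩ := ‹Nonempty X›
  exact (phiRel_nonneg hs (fun y => ((hV x).1 y).le) (fun y => ((hV' x).1 y).le)
    (fun y hy => absurd hy ((hV' x).1 y).ne') (hV x).2 (hV' x).2).trans
    (phiRel_le_phiChannel s x)

theorem Qdist_snoc (n : ℕ) (h : Fin n → X × Y) (p : X × Y) :
    Qdist V strat (n + 1) (Fin.snoc h p) = Qdist V strat n h * (strat n h p.1 * V p.1 p.2) := by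
  rw [Qdist, Fin.prod_univ_castSucc]
  simp only [Fin.snoc_castSucc, Fin.snoc_last]
  simp (disch := omega) only [Fin.snoc, dif_pos, cast_eq, Fin.castLT_mk]
  rfl

theorem Qdist_nonneg (hstrat : IsStrategy strat) (hV : ∀ x y, 0 ≤ V x y) (n : ℕ)
    (h : Fin n → X × Y) : 0 ≤ Qdist V strat n h :=
  Finset.prod_nonneg fun _ _ => mul_nonneg ((hstrat _ _).1 _) (hV _ _)

theorem sum_fin_succ_pi_snoc (n : ℕ) (F : (Fin (n + 1) → X × Y) → ℝ) :
    ∑ h : Fin (n + 1) → X × Y, F h = ∑ h : Fin n → X × Y, ∑ p : X × Y, F (Fin.snoc h p) := by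
  rw [← Fintype.sum_equiv (Fin.snocEquiv fun _ => X × Y) (fun q => F (Fin.snoc q.2 q.1)) F
    fun _ => rfl, Fintype.sum_prod_type, Finset.sum_comm]

theorem sum_Qdist_le_pow (hstrat : IsStrategy strat) (hV : ∀ x y, 0 ≤ V x y) {C : ℝ}
    (hC0 : 0 ≤ C) (hC : ∀ x, ∑ y, V x y ≤ C) (n : ℕ) :
    ∑ h : Fin n → X × Y, Qdist V strat n h ≤ C ^ n := by
  induction n with
  | zero => simp [Qdist]
  | succ n ih =>
    have hstep : ∀ h : Fin n → X × Y,
        ∑ p : X × Y, Qdist V strat (n + 1) (Fin.snoc h p) ≤ Qdist V strat n h * C := by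
      intro h
      simp only [Qdist_snoc, ← Finset.mul_sum, Fintype.sum_prod_type]
      refine mul_le_mul_of_nonneg_left ?_ (Qdist_nonneg hstrat hV n h)
      calc ∑ x, strat n h x * ∑ y, V x y
          ≤ ∑ x, strat n h x * C :=
            Finset.sum_le_sum fun x _ => mul_le_mul_of_nonneg_left (hC x) ((hstrat n h).1 x)
        _ = C := by rw [← Finset.sum_mul, (hstrat n h).2, one_mul]
    calc ∑ h, Qdist V strat (n + 1) h
        ≤ ∑ h : Fin n → X × Y, Qdist V strat n h * C := by
          rw [sum_fin_succ_pi_snoc]; exact Finset.sum_le_sum fun h _ => hstep h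
      _ ≤ C ^ n * C := by rw [← Finset.sum_mul]; exact mul_le_mul_of_nonneg_right ih hC0
      _ = C ^ (n + 1) := (pow_succ C n).symm

theorem Qdist_eq_zero_of_eq_zero (hV : ∀ x y, 0 < V x y) {n : ℕ} {h : Fin n → X × Y}
    (h0 : Qdist V strat n h = 0) : Qdist V' strat n h = 0 := by
  obtain ⟨k, -, hk⟩ := Finset.prod_eq_zero_iff.1 h0
  refine Finset.prod_eq_zero (Finset.mem_univ k) ?_
  rw [(mul_eq_zero.1 hk).resolve_right (hV _ _).ne', zero_mul]

theorem Qdist_rpow_mul_Qdist_rpow (hstrat : IsStrategy strat) (hV : ∀ x y, 0 ≤ V x y)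
    (hV' : ∀ x y, 0 ≤ V' x y) (n : ℕ) (h : Fin n → X × Y) :
    Qdist V' strat n h ^ s * Qdist V strat n h ^ (1 - s) =
      Qdist (fun x y => V' x y ^ s * V x y ^ (1 - s)) strat n h := by
  -- `rpow_add'` only needs `s + (1 - s) ≠ 0`, so vanishing strategy weights `σ` are allowed.
  have hfactor : ∀ σ a b : ℝ, 0 ≤ σ → 0 ≤ a → 0 ≤ b →
      (σ * b) ^ s * (σ * a) ^ (1 - s) = σ * (b ^ s * a ^ (1 - s)) := fun σ a b hσ ha hb => by
    rw [mul_rpow hσ hb, mul_rpow hσ ha]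
    calc σ ^ s * b ^ s * (σ ^ (1 - s) * a ^ (1 - s))
        = σ ^ (s + (1 - s)) * (b ^ s * a ^ (1 - s)) := by rw [rpow_add' hσ (by norm_num)]; ring
      _ = σ * (b ^ s * a ^ (1 - s)) := by rw [add_sub_cancel, rpow_one]
  unfold Qdist
  rw [← finsetProd_rpow _ _ (fun k _ => mul_nonneg ((hstrat _ _).1 _) (hV' _ _)),
    ← finsetProd_rpow _ _ (fun k _ => mul_nonneg ((hstrat _ _).1 _) (hV _ _)),
    ← Finset.prod_mul_distrib]
  exact Finset.prod_congr rfl fun k _ => hfactor _ _ _ ((hstrat _ _).1 _) (hV _ _) (hV' _ _)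

end AdaptiveStrategies

section AdaptiveChernoff

variable {X Y : Type*} [Fintype X] [Fintype Y] [Nonempty X]
  {strat : (k : ℕ) → (Fin k → X × Y) → X → ℝ} {V V' : X → Y → ℝ} {s : ℝ}

theorem phiRel_Qdist_le (hV : IsChannel V) (hV' : IsChannel V') (hstrat : IsStrategy strat)
    (hs : s ≤ 0) (n : ℕ) :
    phiRel s (Qdist V strat n) (Qdist V' strat n) ≤ n * phiChannel s V V' := by
  have hVnn : ∀ x y, 0 ≤ V x y := fun x y => ((hV x).1 y).le
  have hV'nn : ∀ x y, 0 ≤ V' x y := fun x y => ((hV' x).1 y).le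
  have hsum : ∑ h, Qdist V' strat n h ^ s * Qdist V strat n h ^ (1 - s) ≤
      exp (phiChannel s V V') ^ n := by
    simp only [Qdist_rpow_mul_Qdist_rpow hstrat hVnn hV'nn]
    refine sum_Qdist_le_pow hstrat
      (fun x y => mul_nonneg (rpow_nonneg (hV'nn x y) _) (rpow_nonneg (hVnn x y) _))
      (exp_nonneg _) (fun x => ?_) n
    exact (le_exp_log _).trans (exp_le_exp.2 (phiRel_le_phiChannel s x))
  rw [phiRel]
  rcases (Finset.sum_nonneg fun h _ => mul_nonneg (rpow_nonneg (Qdist_nonneg hstrat hV'nn n h) s)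
    (rpow_nonneg (Qdist_nonneg hstrat hVnn n h) (1 - s))).eq_or_lt with h0 | hpos
  · rw [← h0, log_zero]
    exact mul_nonneg n.cast_nonneg (phiChannel_nonneg hV hV' hs)
  · calc _ ≤ log (exp (phiChannel s V V') ^ n) := log_le_log hpos hsum
      _ = n * phiChannel s V V' := by rw [log_pow, log_exp]

theorem one_sub_mul_log_sum_Qdist_mul_le (hV : IsChannel V) (hV' : IsChannel V')
    (hstrat : IsStrategy strat) (hs : s ≤ 0) (n : ℕ) {g : (Fin n → X × Y) → ℝ}
    (hg : ∀ h, g h ∈ Set.Icc (0 : ℝ) 1) :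
    (1 - s) * log (∑ h, Qdist V strat n h * g h) ≤
      -s * log (∑ h, Qdist V' strat n h * g h) + n * phiChannel s V V' := by
  have hVnn : ∀ x y, 0 ≤ V x y := fun x y => ((hV x).1 y).le
  have hV'nn : ∀ x y, 0 ≤ V' x y := fun x y => ((hV' x).1 y).le
  rcases (Finset.sum_nonneg fun h _ => mul_nonneg (Qdist_nonneg hstrat hVnn n h) (hg h).1).eq_or_lt
    with h0 | hpos
  · have hB : ∑ h, Qdist V' strat n h * g h = 0 :=
      sum_mul_eq_zero_of_absolutelyContinuous (Qdist_nonneg hstrat hVnn n)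
        (fun h => Qdist_eq_zero_of_eq_zero fun x y => (hV x).1 y) (fun h => (hg h).1) h0.symm
    rw [← h0, hB, log_zero, mul_zero, mul_zero, zero_add]
    exact mul_nonneg n.cast_nonneg (phiChannel_nonneg hV hV' hs)
  · exact (one_sub_mul_log_sum_mul_le hs (Qdist_nonneg hstrat hVnn n)
      (Qdist_nonneg hstrat hV'nn n) (fun h => Qdist_eq_zero_of_eq_zero fun x y => (hV' x).1 y)
      hg hpos).trans (add_le_add_right (phiRel_Qdist_le hV hV' hstrat hs n) _)

end AdaptiveChernoff

section Liminf

variable {ι : Type*} {l : Filter ι} {a b : ι → ℝ}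

theorem le_liminf_of_eventually_comp_le {g : ℝ → ℝ} {r : ℝ} (hg : Monotone g)
    (hgr : ContinuousAt g r) (hb : IsBoundedUnder (· ≥ ·) l b)
    (ha : IsCoboundedUnder (· ≥ ·) l a)
    (hab : ∀ᶠ i in l, g (b i) ≤ a i) (hr : r ≤ liminf b l) : g r ≤ liminf a l := by
  refine le_of_forall_lt_imp_le_of_dense fun c hc => ?_
  obtain ⟨r', hr'r, hcr'⟩ : ∃ r' < r, c < g r' :=
    ((hgr.eventually (lt_mem_nhds hc)).filter_mono (nhdsWithin_le_nhds (s := Set.Iio r))).and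
      self_mem_nhdsWithin |>.exists.imp fun _ h => ⟨h.2, h.1⟩
  have hbr' : ∀ᶠ i in l, r' < b i := eventually_lt_of_lt_liminf (hr'r.trans_le hr) hb
  exact le_liminf_of_le ha <|
    (hbr'.and hab).mono fun i h => hcr'.le.trans ((hg h.1.le).trans h.2)

theorem isCoboundedUnder_ge_of_eventually_le_mul_add [l.NeBot] {k c : ℝ} (hk : 0 ≤ k)
    (hab : ∀ᶠ i in l, a i ≤ k * b i + c) (hb : IsCoboundedUnder (· ≥ ·) l b) :
    IsCoboundedUnder (· ≥ ·) l a := by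
  obtain ⟨L, hL⟩ := hb.frequently_le
  exact IsCoboundedUnder.of_frequently_le (a := k * L + c) <|
    (hL.and_eventually hab).mono fun i h => h.2.trans (by gcongr; exact h.1)

end Liminf

section ErrorExponent

variable {X Y : Type*} [Fintype X] [Fintype Y]
  {strats : ℕ → (k : ℕ) → (Fin k → X × Y) → X → ℝ} {f : (n : ℕ) → (Fin n → X × Y) → ℝ}
  {V V' : X → Y → ℝ}

noncomputable def errorExponent (V : X → Y → ℝ)
    (strats : ℕ → (k : ℕ) → (Fin k → X × Y) → X → ℝ) (f : (n : ℕ) → (Fin n → X × Y) → ℝ)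
    (n : ℕ) : ℝ :=
  (-1 / (n : ℝ)) * log (∑ h : Fin n → X × Y, Qdist V (strats n) n h * (1 - f n h))

theorem errorExponent_nonneg (hV : IsChannel V) (hstrats : ∀ n, IsStrategy (strats n))
    (hf : ∀ n h, f n h ∈ Set.Icc (0 : ℝ) 1) (n : ℕ) : 0 ≤ errorExponent V strats f n := by
  have hVnn : ∀ x y, 0 ≤ V x y := fun x y => ((hV x).1 y).le
  have hQ := Qdist_nonneg (hstrats n) hVnn n
  have hg h := Set.Icc.mem_iff_one_sub_mem.1 (hf n h)
  refine mul_nonneg_of_nonpos_of_nonpos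
    (div_nonpos_of_nonpos_of_nonneg (by norm_num) n.cast_nonneg)
    (log_nonpos (Finset.sum_nonneg fun h _ => mul_nonneg (hQ h) (hg h).1) ?_)
  calc ∑ h, Qdist V (strats n) n h * (1 - f n h) ≤ ∑ h, Qdist V (strats n) n h :=
        Finset.sum_le_sum fun h _ => mul_le_of_le_one_right (hQ h) (hg h).2
    _ ≤ 1 ^ n := sum_Qdist_le_pow (hstrats n) hVnn zero_le_one (fun x => (hV x).2.le) n
    _ = 1 := one_pow n

theorem le_errorExponent [Nonempty X] (hV : IsChannel V) (hV' : IsChannel V')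
    (hstrats : ∀ n, IsStrategy (strats n)) (hf : ∀ n h, f n h ∈ Set.Icc (0 : ℝ) 1) {s : ℝ}
    (hs : s ≤ 0) {n : ℕ} (hn : n ≠ 0) :
    (-s * errorExponent V' strats f n - phiChannel s V V') / (1 - s) ≤
      errorExponent V strats f n := by
  have key := one_sub_mul_log_sum_Qdist_mul_le hV hV' (hstrats n) hs n
    fun h => Set.Icc.mem_iff_one_sub_mem.1 (hf n h)
  have hn' : (0 : ℝ) < n := Nat.cast_pos.2 (Nat.pos_of_ne_zero hn)
  unfold errorExponent
  rw [div_le_iff₀ (by linarith)]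
  field_simp
  linarith

end ErrorExponent

theorem stmt16 {X Y : Type*} [Fintype X] [Fintype Y] [Nonempty X]
    (W Wb : X → Y → ℝ) (hW : IsChannel W) (hWb : IsChannel Wb)
    (strats : ℕ → (k : ℕ) → (Fin k → X × Y) → X → ℝ)
    (hstrats : ∀ n, IsStrategy (strats n))
    (f : (n : ℕ) → (Fin n → X × Y) → ℝ)
    (hf : ∀ n h, f n h ∈ Set.Icc (0 : ℝ) 1) (r : ℝ)
    (hrate : r ≤
      Filter.liminf (fun n : ℕ => (-1 / (n : ℝ)) *
        Real.log (∑ h : Fin n → X × Y, Qdist Wb (strats n) n h * (1 - f n h)))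
        atTop) :
    (⨆ s : Set.Iic (0 : ℝ),
        (-(s : ℝ) * r - ⨆ x, phiRel (s : ℝ) (W x) (Wb x)) / (1 - (s : ℝ))) ≤
      Filter.liminf (fun n : ℕ => (-1 / (n : ℝ)) *
        Real.log (∑ h : Fin n → X × Y, Qdist W (strats n) n h * (1 - f n h)))
        atTop := by
  change r ≤ liminf (errorExponent Wb strats f) atTop at hrate
  change _ ≤ liminf (errorExponent W strats f) atTop
  refine ciSup_le fun ⟨s, hs⟩ => ?_
  change (-s * r - phiChannel s W Wb) / (1 - s) ≤ _
  have hs' : s ≤ 0 := hs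
  by_cases ha : IsCoboundedUnder (· ≥ ·) atTop (errorExponent W strats f)
  · exact le_liminf_of_eventually_comp_le (g := fun t => (-s * t - phiChannel s W Wb) / (1 - s))
      (fun t u htu => div_le_div_of_nonneg_right (by nlinarith) (by linarith)) (by fun_prop)
      (isBoundedUnder_of ⟨0, errorExponent_nonneg hWb hstrats hf⟩) ha
      ((eventually_ne_atTop 0).mono fun n hn => le_errorExponent hW hWb hstrats hf hs' hn) hrate
  · have hb : ¬ IsCoboundedUnder (· ≥ ·) atTop (errorExponent Wb strats f) := fun hb =>
      ha <| isCoboundedUnder_ge_of_eventually_le_mul_add zero_le_two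
        ((eventually_ne_atTop 0).mono fun n hn => by
          have := le_errorExponent hWb hW hstrats hf (s := -1) (by norm_num) hn
          rw [div_le_iff₀ (by norm_num)] at this
          linarith) hb
    rw [Real.liminf_of_not_isCoboundedUnder hb] at hrate
    rw [Real.liminf_of_not_isCoboundedUnder ha]
    exact div_nonpos_of_nonpos_of_nonneg (by nlinarith [phiChannel_nonneg hW hWb hs'])
      (by linarith)
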